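/- Let P(x,y) = ū_0 + c_1 φ_1 + c_2 φ_2 + c_3 φ_3 + c_4 φ_4 + c_5 φ_5 be a second-degree polynomial, where φ_1 = x−x_0, φ_2 = y−y_0, φ_3 = (x−x_0)²−Δx²/12, φ_4 = (y−y_0)²−Δy²/12, φ_5 = (x−x_0)(y−y_0). Then its Jiang–Shu oscillation indicator over the cell Ω_0 equals I[P] = A(c_1² + c_2²) + A[ Δx² c_3²/3 + Δy² c_4²/3 + (Δx²+Δy²)(4c_3² + 4c_4² + (13/12)c_5²) ], where A = ΔxΔy. -/

import Mathlib

/-!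
The first partial derivatives of `P` are affine in `X = x - x₀`, `Y = y - y₀` and the second
ones are constant. On the cell centred at `(x₀, y₀)` the odd moments of `X` and `Y` vanish and
`∫ X² = Δx³/12`, so `∬ (a + bX + cY)² = ΔxΔy (a² + b²Δx²/12 + c²Δy²/12)`; substituting the
derivatives of `P` and `h² = Δx² + Δy²` gives the formula.
-/

open MeasureTheory intervalIntegral

/-- Partial derivative with respect to the first variable. -/
noncomputable def dX (f : ℝ → ℝ → ℝ) : ℝ → ℝ → ℝ :=
  fun x y => deriv (fun x' => f x' y) x

/-- Partial derivative with respect to the second variable. -/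
noncomputable def dY (f : ℝ → ℝ → ℝ) : ℝ → ℝ → ℝ :=
  fun x y => deriv (fun y' => f x y') y

/-- Double integral over the cell `Ω_0 = [x0−Δx/2, x0+Δx/2] × [y0−Δy/2, y0+Δy/2]`. -/
noncomputable def cellInt (x0 y0 dx dy : ℝ) (f : ℝ → ℝ → ℝ) : ℝ :=
  ∫ x in (x0 - dx / 2)..(x0 + dx / 2),
    ∫ y in (y0 - dy / 2)..(y0 + dy / 2), f x y

lemma integral_quadratic_symm (p q r d : ℝ) :
    ∫ s in (-(d / 2))..(d / 2), (p + q * s + r * s ^ 2) = p * d + r * d ^ 3 / 12 := by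
  have hint : ∀ g : ℝ → ℝ, Continuous g → IntervalIntegrable g volume (-(d / 2)) (d / 2) :=
    fun g hg => hg.intervalIntegrable _ _
  rw [integral_add (hint _ (by fun_prop)) (hint _ (by fun_prop)),
    integral_add (hint _ (by fun_prop)) (hint _ (by fun_prop)),
    intervalIntegral.integral_const_mul, intervalIntegral.integral_const_mul, integral_id,
    integral_pow, intervalIntegral.integral_const, smul_eq_mul]
  ring

lemma integral_quadratic_centered {f : ℝ → ℝ} (c d p q r : ℝ)
    (hf : ∀ y, f y = p + q * (y - c) + r * (y - c) ^ 2) :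
    ∫ y in (c - d / 2)..(c + d / 2), f y = p * d + r * d ^ 3 / 12 := by
  have hshift : ∫ y in (c - d / 2)..(c + d / 2), f y =
      ∫ s in (c - d / 2 - c)..(c + d / 2 - c), (p + q * s + r * s ^ 2) := by
    simp only [hf]
    exact integral_comp_sub_right (fun s => p + q * s + r * s ^ 2) c
  rw [hshift, show c - d / 2 - c = -(d / 2) by ring, show c + d / 2 - c = d / 2 by ring,
    integral_quadratic_symm]

section Cell

variable (x0 y0 dx dy : ℝ)

lemma cellInt_const (k : ℝ) : cellInt x0 y0 dx dy (fun _ _ => k) = dx * dy * k := by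
  simp only [cellInt, intervalIntegral.integral_const, smul_eq_mul]
  ring

lemma cellInt_sq_affine (a b c : ℝ) :
    cellInt x0 y0 dx dy (fun x y => (a + b * (x - x0) + c * (y - y0)) ^ 2) =
      dx * dy * (a ^ 2 + b ^ 2 * dx ^ 2 / 12 + c ^ 2 * dy ^ 2 / 12) := by
  have hinner : ∀ x, ∫ y in (y0 - dy / 2)..(y0 + dy / 2), (a + b * (x - x0) + c * (y - y0)) ^ 2 =
      (a + b * (x - x0)) ^ 2 * dy + c ^ 2 * dy ^ 3 / 12 :=
    fun x => integral_quadratic_centered y0 dy _ (2 * (a + b * (x - x0)) * c) _ fun y => by ring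
  rw [cellInt, integral_congr fun x _ => hinner x,
    integral_quadratic_centered x0 dx (a ^ 2 * dy + c ^ 2 * dy ^ 3 / 12) (2 * a * b * dy)
      (b ^ 2 * dy) fun x => by ring]
  ring

end Cell

lemma hasDerivAt_quadratic (a b e c x : ℝ) :
    HasDerivAt (fun t => a + b * (t - c) + e * (t - c) ^ 2) (b + 2 * e * (x - c)) x := by
  have h : HasDerivAt (fun t : ℝ => t - c) 1 x := (hasDerivAt_id' x).sub_const c
  exact (((h.const_mul b).const_add a).fun_add ((h.fun_pow 2).const_mul e)).congr_deriv
    (by push_cast; ring)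

lemma deriv_of_eq_quadratic {f : ℝ → ℝ} {a b e c : ℝ}
    (hf : ∀ t, f t = a + b * (t - c) + e * (t - c) ^ 2) (x : ℝ) :
    deriv f x = b + 2 * e * (x - c) := by
  rw [funext hf]
  exact (hasDerivAt_quadratic a b e c x).deriv

section Partials

variable (x0 y0 a b c d e f : ℝ)

lemma dX_affine : dX (fun x y => a + b * (x - x0) + c * (y - y0)) = fun _ _ => b := by
  funext x y
  exact (deriv_of_eq_quadratic (a := a + c * (y - y0)) (b := b) (e := 0) (c := x0)
    (fun t => by ring) x).trans (by ring)

lemma dY_affine : dY (fun x y => a + b * (x - x0) + c * (y - y0)) = fun _ _ => c := by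
  funext x y
  exact (deriv_of_eq_quadratic (a := a + b * (x - x0)) (b := c) (e := 0) (c := y0)
    (fun t => by ring) y).trans (by ring)

lemma dX_quadratic :
    dX (fun x y => a + b * (x - x0) + c * (y - y0) + d * (x - x0) ^ 2 + e * (y - y0) ^ 2 +
        f * ((x - x0) * (y - y0))) =
      fun x y => b + 2 * d * (x - x0) + f * (y - y0) := by
  funext x y
  exact (deriv_of_eq_quadratic (a := a + c * (y - y0) + e * (y - y0) ^ 2)
    (b := b + f * (y - y0)) (e := d) (c := x0) (fun t => by ring) x).trans (by ring)

lemma dY_quadratic :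
    dY (fun x y => a + b * (x - x0) + c * (y - y0) + d * (x - x0) ^ 2 + e * (y - y0) ^ 2 +
        f * ((x - x0) * (y - y0))) =
      fun x y => c + f * (x - x0) + 2 * e * (y - y0) := by
  funext x y
  exact (deriv_of_eq_quadratic (a := a + b * (x - x0) + d * (x - x0) ^ 2)
    (b := c + f * (x - x0)) (e := e) (c := y0) (fun t => by ring) y).trans (by ring)

end Partials

theorem jiang_shu_indicator_quadratic_general
    (x0 y0 dx dy u0 c1 c2 c3 c4 c5 : ℝ) :
    let P : ℝ → ℝ → ℝ := fun x y =>
      u0 + c1 * (x - x0) + c2 * (y - y0) + c3 * ((x - x0) ^ 2 - dx ^ 2 / 12) +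
        c4 * ((y - y0) ^ 2 - dy ^ 2 / 12) + c5 * ((x - x0) * (y - y0))
    let h : ℝ := Real.sqrt (dx ^ 2 + dy ^ 2)
    -- terms with |α| = 1 (factor h^0 = 1) and |α| = 2 (factor h²)
    (cellInt x0 y0 dx dy (fun x y => (dX P x y) ^ 2) +
        cellInt x0 y0 dx dy (fun x y => (dY P x y) ^ 2)) +
      h ^ 2 *
        (cellInt x0 y0 dx dy (fun x y => (dX (dX P) x y) ^ 2) +
          cellInt x0 y0 dx dy (fun x y => (dX (dY P) x y) ^ 2) +
          cellInt x0 y0 dx dy (fun x y => (dY (dY P) x y) ^ 2)) =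
    dx * dy * (c1 ^ 2 + c2 ^ 2) +
      dx * dy *
        (dx ^ 2 * c3 ^ 2 / 3 + dy ^ 2 * c4 ^ 2 / 3 +
          (dx ^ 2 + dy ^ 2) *
            (4 * c3 ^ 2 + 4 * c4 ^ 2 + 13 / 12 * c5 ^ 2)) := by
  intro P h
  have hP : P = fun x y => (u0 - c3 * dx ^ 2 / 12 - c4 * dy ^ 2 / 12) + c1 * (x - x0) +
      c2 * (y - y0) + c3 * (x - x0) ^ 2 + c4 * (y - y0) ^ 2 + c5 * ((x - x0) * (y - y0)) := by
    funext x y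
    simp only [P]
    ring
  have hh : h ^ 2 = dx ^ 2 + dy ^ 2 := Real.sq_sqrt (by positivity)
  rw [hP, hh]
  simp only [dX_quadratic, dY_quadratic, dX_affine, dY_affine, cellInt_sq_affine, cellInt_const]
  ring

/-- the Jiang–Shu oscillation indicator of the second-degree
polynomial `P = ū_0 + c_1 φ_1 + ⋯ + c_5 φ_5` over the cell `Ω_0`
(diameter `h = √(Δx²+Δy²)`, so `h² = Δx²+Δy²`) equals
`A(c_1²+c_2²) + A[Δx² c_3²/3 + Δy² c_4²/3 + (Δx²+Δy²)(4c_3²+4c_4²+(13/12)c_5²)]`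
with `A = ΔxΔy`. -/
theorem jiang_shu_indicator_quadratic
    (x0 y0 dx dy u0 c1 c2 c3 c4 c5 : ℝ) (hdx : 0 < dx) (hdy : 0 < dy) :
    let P : ℝ → ℝ → ℝ := fun x y =>
      u0 + c1 * (x - x0) + c2 * (y - y0) + c3 * ((x - x0) ^ 2 - dx ^ 2 / 12) +
        c4 * ((y - y0) ^ 2 - dy ^ 2 / 12) + c5 * ((x - x0) * (y - y0))
    let h : ℝ := Real.sqrt (dx ^ 2 + dy ^ 2)
    -- terms with |α| = 1 (factor h^0 = 1) and |α| = 2 (factor h²)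
    (cellInt x0 y0 dx dy (fun x y => (dX P x y) ^ 2) +
        cellInt x0 y0 dx dy (fun x y => (dY P x y) ^ 2)) +
      h ^ 2 *
        (cellInt x0 y0 dx dy (fun x y => (dX (dX P) x y) ^ 2) +
          cellInt x0 y0 dx dy (fun x y => (dX (dY P) x y) ^ 2) +
          cellInt x0 y0 dx dy (fun x y => (dY (dY P) x y) ^ 2)) =
    dx * dy * (c1 ^ 2 + c2 ^ 2) +
      dx * dy *
        (dx ^ 2 * c3 ^ 2 / 3 + dy ^ 2 * c4 ^ 2 / 3 +
          (dx ^ 2 + dy ^ 2) *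
            (4 * c3 ^ 2 + 4 * c4 ^ 2 + 13 / 12 * c5 ^ 2)) :=
  jiang_shu_indicator_quadratic_general x0 y0 dx dy u0 c1 c2 c3 c4 c5
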